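/- arXiv:1011.4697 — 6 statements merged into one kernel-verified Lean document; each statement's English description precedes it below -/
import Mathlib

section
/- (Dilution test) Let (a_n) be a nonincreasing sequence of nonnegative reals and s(1) < s(2) < ... a strictly increasing sequence of positive integers with counting function S(n) = #{k : s(k) ≤ n}. Then the subseries ∑_{k≥1} a_{s(k)} converges if and only if ∑_{n≥s(1)} a_n / (s(S(n)+1) − s(S(n))) converges. -/
open Finset

theorem dilution_test
    (a : ℕ → ℝ) (ha0 : ∀ n, 0 ≤ a n) (ha : ∀ n, a (n + 1) ≤ a n)
    (s : ℕ → ℕ) (hs : StrictMono s) (hs1 : ∀ k, 1 ≤ s k)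
    (S : ℕ → ℕ) (hS : ∀ n, S n = Set.ncard {k | 1 ≤ k ∧ s k ≤ n}) :
    Summable (fun k => a (s (k + 1))) ↔
      Summable (fun n =>
        a (n + s 1) / ((s (S (n + s 1) + 1) - s (S (n + s 1)) : ℕ) : ℝ)) := by
  have antA : Antitone a := antitone_nat_of_succ_le ha
  set g : ℕ → ℝ := fun n =>
    a (n + s 1) / ((s (S (n + s 1) + 1) - s (S (n + s 1)) : ℕ) : ℝ) with hgdef
  set B : ℕ → ℝ := fun j =>
    ∑ m ∈ Finset.Ico (s j) (s (j+1)), a m / ((s (j+1) - s j : ℕ) : ℝ) with hBdef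
  have hΔpos : ∀ j, (0:ℝ) < ((s (j+1) - s j : ℕ) : ℝ) := fun j => by
    have := hs (Nat.lt_succ_self j)
    exact_mod_cast Nat.sub_pos_of_lt this
  have hg0 : ∀ n, 0 ≤ g n := fun n => div_nonneg (ha0 _) (Nat.cast_nonneg _)
  -- value of S on blocks
  have hSeq : ∀ j m, 1 ≤ j → s j ≤ m → m < s (j+1) → S m = j := by
    intro j m hj h1 h2
    rw [hS]
    have hset : {k | 1 ≤ k ∧ s k ≤ m} = Set.Icc 1 j := by
      ext k
      simp only [Set.mem_setOf_eq, Set.mem_Icc]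
      constructor
      · rintro ⟨hk1, hk2⟩
        refine ⟨hk1, ?_⟩
        by_contra h
        push_neg at h
        exact absurd (le_trans (hs.monotone h) hk2) (not_le.mpr h2)
      · rintro ⟨hk1, hk2⟩
        exact ⟨hk1, le_trans (hs.monotone hk2) h1⟩
    rw [hset]
    simp [Set.ncard_eq_toFinset_card', Set.toFinset_Icc]
  -- block sums
  have hblock : ∀ j, 1 ≤ j →
      ∑ m ∈ Finset.Ico (s j) (s (j+1)),
        a m / ((s (S m + 1) - s (S m) : ℕ) : ℝ) = B j := by
    intro j hj
    refine Finset.sum_congr rfl fun m hm => ?_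
    rw [hSeq j m hj (Finset.mem_Ico.1 hm).1 (Finset.mem_Ico.1 hm).2]
  -- bounds on block sums
  have hB_le : ∀ j, B j ≤ a (s j) := by
    intro j
    have hΔ := hΔpos j
    calc B j ≤ ∑ m ∈ Finset.Ico (s j) (s (j+1)),
          a (s j) / ((s (j+1) - s j : ℕ) : ℝ) := by
          refine Finset.sum_le_sum fun m hm => ?_
          gcongr
          exact antA (Finset.mem_Ico.1 hm).1
      _ = a (s j) := by
          rw [Finset.sum_const, Nat.card_Ico, nsmul_eq_mul]
          have hΔ' : ((s (j+1) - s j : ℕ) : ℝ) ≠ 0 := ne_of_gt hΔ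
          field_simp
  have hle_B : ∀ j, a (s (j+1)) ≤ B j := by
    intro j
    have hΔ := hΔpos j
    calc a (s (j+1)) = ∑ m ∈ Finset.Ico (s j) (s (j+1)),
          a (s (j+1)) / ((s (j+1) - s j : ℕ) : ℝ) := by
          rw [Finset.sum_const, Nat.card_Ico, nsmul_eq_mul]
          have hΔ' : ((s (j+1) - s j : ℕ) : ℝ) ≠ 0 := ne_of_gt hΔ
          field_simp
      _ ≤ B j := by
          refine Finset.sum_le_sum fun m hm => ?_
          gcongr
          exact antA (le_of_lt (Finset.mem_Ico.1 hm).2)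
  -- growth of s
  have hs1le : ∀ n, s 1 + n ≤ s (n+1) := by
    intro n
    induction n with
    | zero => simp
    | succ n ih =>
        have h : s (n+1) < s (n+1+1) := hs (by omega)
        omega
  -- partial sums of g
  have psum : ∀ J, ∑ n ∈ Finset.range (s (J+1) - s 1), g n
      = ∑ j ∈ Finset.range J, B (j+1) := by
    intro J
    induction J with
    | zero => simp
    | succ J ih =>
        have h1 : s 1 ≤ s (J+1) := hs.monotone (by omega)
        have h2 : s (J+1) ≤ s (J+2) := le_of_lt (hs (Nat.lt_succ_self (J+1)))
        rw [Finset.range_eq_Ico,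
          ← Finset.sum_Ico_consecutive _ (Nat.zero_le (s (J+1) - s 1))
            (by omega : s (J+1) - s 1 ≤ s (J+2) - s 1),
          ← Finset.range_eq_Ico, ih, Finset.sum_range_succ]
        congr 1
        rw [← hblock (J+1) (by omega), Finset.sum_Ico_eq_sum_range,
          Finset.sum_Ico_eq_sum_range]
        have hcard : s (J+2) - s 1 - (s (J+1) - s 1) = s (J+2) - s (J+1) := by omega
        rw [hcard]
        refine Finset.sum_congr rfl fun i hi => ?_
        have harg : s (J+1) - s 1 + i + s 1 = s (J+1) + i := by omega
        simp only [hgdef, harg]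
  constructor
  · intro hsum
    refine summable_of_sum_range_le hg0 (fun N => ?_) (c := ∑' k, a (s (k+1)))
    have h1 : ∑ n ∈ Finset.range N, g n
        ≤ ∑ n ∈ Finset.range (s (N+1) - s 1), g n := by
      refine Finset.sum_le_sum_of_subset_of_nonneg ?_ (fun i _ _ => hg0 i)
      refine Finset.range_subset_range.2 ?_
      have := hs1le N
      omega
    calc ∑ n ∈ Finset.range N, g n ≤ ∑ j ∈ Finset.range N, B (j+1) := by
          rw [← psum N]; exact h1
      _ ≤ ∑ j ∈ Finset.range N, a (s (j+1)) :=
          Finset.sum_le_sum fun j _ => hB_le (j+1)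
      _ ≤ ∑' k, a (s (k+1)) := Summable.sum_le_tsum _ (fun k _ => ha0 _) hsum
  · intro hg
    have h2 : Summable (fun k => a (s (k + 1 + 1))) := by
      refine summable_of_sum_range_le (fun k => ha0 _) (fun K => ?_) (c := ∑' n, g n)
      calc ∑ k ∈ Finset.range K, a (s (k+1+1))
          ≤ ∑ j ∈ Finset.range K, B (j+1) :=
            Finset.sum_le_sum fun j _ => hle_B (j+1)
        _ = ∑ n ∈ Finset.range (s (K+1) - s 1), g n := (psum K).symm
        _ ≤ ∑' n, g n := Summable.sum_le_tsum _ (fun n _ => hg0 n) hg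
    exact (summable_nat_add_iff 1).mp h2
end

section
/- (Two-sided bound for the diluted series) Let (a_n) be nonincreasing and nonnegative and s(1) < s(2) < ... strictly increasing positive integers with counting function S. Then ∑_{k≥2} a_{s(k)} ≤ ∑_{n≥s(1)} a_n / Δs(S(n)) ≤ ∑_{k≥1} a_{s(k)}, where Δs(k) = s(k+1) − s(k), whenever the right-hand series converges (and the inequalities hold in the extended reals in general). -/
open scoped ENNReal
open Finset Filter

/-!
Cut the diluted series into the blocks `[s k, s (k + 1))`, `k ≥ 1`, on which `S` is constantly `k`.
The block `k` then contributes the average of `a` over the block, which, `a` being nonincreasing,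
lies between `a (s (k + 1))` and `a (s k)`.
-/

theorem Finset.sum_Ico_eq_sum_range_sum_Ico {M : Type*} [AddCommMonoid M] (f : ℕ → M)
    {s : ℕ → ℕ} (hs : Monotone s) (K : ℕ) :
    ∑ m ∈ Ico (s 0) (s K), f m = ∑ k ∈ range K, ∑ m ∈ Ico (s k) (s (k + 1)), f m := by
  induction K with
  | zero => simp
  | succ K ih =>
    rw [sum_range_succ, ← ih, sum_Ico_consecutive _ (hs K.zero_le) (hs K.le_succ)]

theorem ENNReal.tsum_add_eq_tsum_sum_Ico (f : ℕ → ℝ≥0∞) {s : ℕ → ℕ} (hs : Monotone s)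
    (hs_top : Tendsto s atTop atTop) :
    ∑' n, f (n + s 0) = ∑' k, ∑ m ∈ Ico (s k) (s (k + 1)), f m := by
  have hlen : Tendsto (fun K ↦ s K - s 0) atTop atTop :=
    tendsto_sub_atTop_nat (s 0) |>.comp hs_top
  rw [ENNReal.tsum_eq_iSup_nat' hlen, ENNReal.tsum_eq_iSup_nat]
  refine iSup_congr fun K ↦ ?_
  rw [← sum_Ico_eq_sum_range_sum_Ico f hs, sum_Ico_eq_sum_range]
  simp_rw [add_comm]

theorem StrictMono.ncard_setOf_apply_le {s : ℕ → ℕ} (hs : StrictMono s) {k m : ℕ} (hk : s k ≤ m)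
    (hm : m < s (k + 1)) : Set.ncard {j | 1 ≤ j ∧ s j ≤ m} = k := by
  have : {j | 1 ≤ j ∧ s j ≤ m} = Set.Icc 1 k := by
    ext j
    simp only [Set.mem_ofPred_eq, Set.mem_Icc, and_congr_right_iff]
    intro _
    exact ⟨fun hj ↦ Nat.lt_succ_iff.mp (hs.lt_iff_lt.mp (hj.trans_lt hm)),
      fun hj ↦ (hs.monotone hj).trans hk⟩
  rw [this, ← Finset.coe_Icc, Set.ncard_coe_finset, Nat.card_Icc, Nat.add_sub_cancel]

theorem Antitone.le_sum_Ico_div {a : ℕ → ℝ≥0∞} (ha : Antitone a) {i j : ℕ} (hij : i < j) :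
    a j ≤ ∑ m ∈ Ico i j, a m / ((j - i : ℕ) : ℝ≥0∞) := by
  have hlen : ((j - i : ℕ) : ℝ≥0∞) ≠ 0 := by rw [Nat.cast_ne_zero]; omega
  calc a j = (j - i : ℕ) * (a j / (j - i : ℕ)) :=
        (ENNReal.mul_div_cancel hlen (ENNReal.natCast_ne_top _)).symm
    _ = #(Ico i j) • (a j / (j - i : ℕ)) := by rw [Nat.card_Ico, nsmul_eq_mul]
    _ ≤ ∑ m ∈ Ico i j, a m / ((j - i : ℕ) : ℝ≥0∞) :=
        card_nsmul_le_sum _ _ _ fun m hm ↦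
          ENNReal.div_le_div_right (ha (mem_Ico.mp hm).2.le) _

theorem Antitone.sum_Ico_div_le {a : ℕ → ℝ≥0∞} (ha : Antitone a) (i j : ℕ) :
    ∑ m ∈ Ico i j, a m / ((j - i : ℕ) : ℝ≥0∞) ≤ a i :=
  calc ∑ m ∈ Ico i j, a m / ((j - i : ℕ) : ℝ≥0∞)
      ≤ #(Ico i j) • (a i / (j - i : ℕ)) :=
        sum_le_card_nsmul _ _ _ fun m hm ↦ ENNReal.div_le_div_right (ha (mem_Ico.mp hm).1) _
    _ = (j - i : ℕ) * (a i / (j - i : ℕ)) := by rw [Nat.card_Ico, nsmul_eq_mul]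
    _ ≤ a i := ENNReal.mul_div_le

theorem dilution_two_sided_bound_general
    (a : ℕ → ℝ≥0∞) (ha : ∀ n, a (n + 1) ≤ a n)
    (s : ℕ → ℕ) (hs : StrictMono s)
    (S : ℕ → ℕ) (hS : ∀ n, S n = Set.ncard {k | 1 ≤ k ∧ s k ≤ n}) :
    (∑' k, a (s (k + 2)))
        ≤ ∑' n, a (n + s 1) / ((s (S (n + s 1) + 1) - s (S (n + s 1)) : ℕ) : ℝ≥0∞) ∧
    (∑' n, a (n + s 1) / ((s (S (n + s 1) + 1) - s (S (n + s 1)) : ℕ) : ℝ≥0∞))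
        ≤ ∑' k, a (s (k + 1)) := by
  have hanti : Antitone a := antitone_nat_of_succ_le ha
  have hs' : StrictMono fun k ↦ s (k + 1) := hs.comp add_left_strictMono
  have hblocks : ∑' n, a (n + s 1) / ((s (S (n + s 1) + 1) - s (S (n + s 1)) : ℕ) : ℝ≥0∞)
      = ∑' k, ∑ m ∈ Ico (s (k + 1)) (s (k + 2)), a m / ((s (k + 2) - s (k + 1) : ℕ) : ℝ≥0∞) := by
    refine (ENNReal.tsum_add_eq_tsum_sum_Ico
      (fun m ↦ a m / ((s (S m + 1) - s (S m) : ℕ) : ℝ≥0∞)) hs'.monotone hs'.tendsto_atTop).trans ?_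
    refine tsum_congr fun k ↦ sum_congr rfl fun m hm ↦ ?_
    rw [hS, hs.ncard_setOf_apply_le (mem_Ico.mp hm).1 (mem_Ico.mp hm).2]
  rw [hblocks]
  exact ⟨ENNReal.tsum_le_tsum fun k ↦ hanti.le_sum_Ico_div (hs (k + 1).lt_succ_self),
    ENNReal.tsum_le_tsum fun k ↦ hanti.sum_Ico_div_le _ _⟩

theorem dilution_two_sided_bound
    (a : ℕ → ℝ≥0∞) (ha : ∀ n, a (n + 1) ≤ a n)
    (s : ℕ → ℕ) (hs : StrictMono s) (hs1 : ∀ k, 1 ≤ s k)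
    (S : ℕ → ℕ) (hS : ∀ n, S n = Set.ncard {k | 1 ≤ k ∧ s k ≤ n}) :
    (∑' k, a (s (k + 2)))
        ≤ ∑' n, a (n + s 1) / ((s (S (n + s 1) + 1) - s (S (n + s 1)) : ℕ) : ℝ≥0∞) ∧
    (∑' n, a (n + s 1) / ((s (S (n + s 1) + 1) - s (S (n + s 1)) : ℕ) : ℝ≥0∞))
        ≤ ∑' k, a (s (k + 1)) :=
  dilution_two_sided_bound_general a ha s hs S hS
end

section
/- (Sufficient sparsity condition) Let (a_n) be a nonincreasing sequence of nonnegative reals such that ∑_{n≥1} a_n^p converges for some p > 1, and let s(1) < s(2) < ... be a strictly increasing sequence of positive integers with ∑_{k≥1} s(k)^{−1/p} < ∞. Then the subseries ∑_{k≥1} a_{s(k)} converges. -/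
theorem sufficient_sparsity
    (a : ℕ → ℝ) (ha0 : ∀ n, 0 ≤ a n) (ha : ∀ n, a (n + 1) ≤ a n)
    (p : ℝ) (hp : 1 < p)
    (hsum : Summable (fun n => a (n + 1) ^ p))
    (s : ℕ → ℕ) (hs : StrictMono s) (hs1 : ∀ k, 1 ≤ s k)
    (hsparse : Summable (fun k => (s (k + 1) : ℝ) ^ (-(1 / p)))) :
    Summable (fun k => a (s (k + 1))) := by
  have hp0 : (0 : ℝ) < p := lt_trans one_pos hp
  have hanti : Antitone a := antitone_nat_of_succ_le ha
  set S := ∑' n, a (n + 1) ^ p with hS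
  have hS0 : 0 ≤ S := tsum_nonneg fun n => Real.rpow_nonneg (ha0 _) _
  -- key bound: for n ≥ 1, a n ≤ S^(1/p) * n^(-(1/p))
  have key : ∀ n : ℕ, 1 ≤ n → a n ≤ S ^ (1 / p) * (n : ℝ) ^ (-(1 / p)) := by
    intro n hn
    have hpos : (0 : ℝ) < n := by exact_mod_cast hn
    have h1 : (n : ℝ) * a n ^ p ≤ S := by
      calc (n : ℝ) * a n ^ p = ∑ m ∈ Finset.range n, a n ^ p := by
            rw [Finset.sum_const, Finset.card_range, nsmul_eq_mul]
        _ ≤ ∑ m ∈ Finset.range n, a (m + 1) ^ p := by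
            apply Finset.sum_le_sum
            intro m hm
            exact Real.rpow_le_rpow (ha0 _) (hanti (Finset.mem_range.mp hm)) hp0.le
        _ ≤ S := Summable.sum_le_tsum _ (fun m _ => Real.rpow_nonneg (ha0 _) _) hsum
    have h2 : a n ^ p ≤ S / n := (le_div_iff₀' hpos).mpr h1
    have h3 : (a n ^ p) ^ (1 / p) ≤ (S / n) ^ (1 / p) :=
      Real.rpow_le_rpow (Real.rpow_nonneg (ha0 _) _) h2 (by positivity)
    have h4 : (a n ^ p) ^ (1 / p) = a n := by
      rw [← Real.rpow_mul (ha0 n), mul_one_div_cancel hp0.ne', Real.rpow_one]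
    have h5 : (S / (n : ℝ)) ^ (1 / p) = S ^ (1 / p) * (n : ℝ) ^ (-(1 / p)) := by
      rw [Real.div_rpow hS0 hpos.le, Real.rpow_neg hpos.le, div_eq_mul_inv]
    rw [h4, h5] at h3
    exact h3
  apply Summable.of_nonneg_of_le (fun k => ha0 _) (fun k => key _ (hs1 _))
  exact hsparse.mul_left _
end

section
/- (Majorant transfer of the dilution test) Let (a_n) be a real sequence and (b_n) a nonincreasing sequence of nonnegative reals with |a_n| ≤ b_n for all n. Let s(1) < s(2) < ... be a strictly increasing sequence of positive integers with counting function S. If ∑_{n≥s(1)} b_n / (s(S(n)+1) − s(S(n))) converges, then ∑_{k≥1} a_{s(k)} converges absolutely. -/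
theorem majorant_dilution_transfer
    (a b : ℕ → ℝ) (hb0 : ∀ n, 0 ≤ b n) (hb : ∀ n, b (n + 1) ≤ b n)
    (hab : ∀ n, |a n| ≤ b n)
    (s : ℕ → ℕ) (hs : StrictMono s) (hs1 : ∀ k, 1 ≤ s k)
    (S : ℕ → ℕ) (hS : ∀ n, S n = Set.ncard {k | 1 ≤ k ∧ s k ≤ n})
    (hsum : Summable (fun n =>
      b (n + s 1) / ((s (S (n + s 1) + 1) - s (S (n + s 1)) : ℕ) : ℝ))) :
    Summable (fun k => |a (s (k + 1))|) := by
  set f : ℕ → ℝ := fun n => b n / ((s (S n + 1) - s (S n) : ℕ) : ℝ) with hf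
  have hbanti : Antitone b := antitone_nat_of_succ_le hb
  have hf0 : ∀ n, 0 ≤ f n := fun n => div_nonneg (hb0 n) (Nat.cast_nonneg _)
  -- value of S on blocks
  have hSn : ∀ k n, s (k + 1) ≤ n → n < s (k + 2) → S n = k + 1 := by
    intro k n h1 h2
    rw [hS]
    have hset : {j | 1 ≤ j ∧ s j ≤ n} = ↑(Finset.Icc 1 (k + 1)) := by
      ext j
      simp only [Set.mem_setOf_eq, Finset.coe_Icc, Set.mem_Icc]
      constructor
      · rintro ⟨hj1, hjs⟩
        refine ⟨hj1, ?_⟩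
        by_contra hlt
        push_neg at hlt
        have : s (k + 2) ≤ s j := hs.le_iff_le.mpr hlt
        omega
      · rintro ⟨hj1, hjk⟩
        exact ⟨hj1, le_trans (hs.le_iff_le.mpr hjk) h1⟩
    rw [hset, Set.ncard_coe_finset, Nat.card_Icc]; omega
  -- block bound
  have hblock : ∀ k, |a (s (k + 2))| ≤ ∑ n ∈ Finset.Ico (s (k + 1)) (s (k + 2)), f n := by
    intro k
    have hΔ : 0 < s (k + 2) - s (k + 1) := by
      have := hs (by omega : k + 1 < k + 2); omega
    have hlow : ∀ n ∈ Finset.Ico (s (k + 1)) (s (k + 2)),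
        b (s (k + 2)) / ((s (k + 2) - s (k + 1) : ℕ) : ℝ) ≤ f n := by
      intro n hn
      rw [Finset.mem_Ico] at hn
      rw [hf]
      simp only
      rw [hSn k n hn.1 hn.2]
      gcongr
      exact hbanti (le_of_lt hn.2)
    calc |a (s (k + 2))| ≤ b (s (k + 2)) := hab _
      _ = (s (k + 2) - s (k + 1) : ℕ) * (b (s (k + 2)) / ((s (k + 2) - s (k + 1) : ℕ) : ℝ)) := by
          rw [mul_div_cancel₀]
          positivity
      _ = ∑ n ∈ Finset.Ico (s (k + 1)) (s (k + 2)),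
            b (s (k + 2)) / ((s (k + 2) - s (k + 1) : ℕ) : ℝ) := by
          rw [Finset.sum_const, Nat.card_Ico, nsmul_eq_mul]
      _ ≤ ∑ n ∈ Finset.Ico (s (k + 1)) (s (k + 2)), f n := Finset.sum_le_sum hlow
  -- partial sums of blocks telescope
  have htel : ∀ K, ∑ k ∈ Finset.range K, ∑ n ∈ Finset.Ico (s (k + 1)) (s (k + 2)), f n
      = ∑ n ∈ Finset.Ico (s 1) (s (K + 1)), f n := by
    intro K
    induction K with
    | zero => simp
    | succ K ih =>
      rw [Finset.sum_range_succ, ih,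
        Finset.sum_Ico_consecutive _ (hs.monotone (by omega)) (hs.monotone (by omega))]
  have hC : ∀ K, ∑ n ∈ Finset.Ico (s 1) (s (K + 1)), f n
      ≤ ∑' n, f (n + s 1) := by
    intro K
    rw [Finset.sum_Ico_eq_sum_range]
    have : ∀ i ∈ Finset.range (s (K + 1) - s 1), f (s 1 + i) = f (i + s 1) := by
      intro i _; rw [add_comm]
    rw [Finset.sum_congr rfl this]
    exact Summable.sum_le_tsum _ (fun i _ => hf0 _) hsum
  have h2 : Summable (fun k => |a (s (k + 2))|) := by
    apply summable_of_sum_range_le (fun k => abs_nonneg _)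
    intro K
    calc ∑ k ∈ Finset.range K, |a (s (k + 2))|
        ≤ ∑ k ∈ Finset.range K, ∑ n ∈ Finset.Ico (s (k + 1)) (s (k + 2)), f n :=
          Finset.sum_le_sum (fun k _ => hblock k)
      _ = ∑ n ∈ Finset.Ico (s 1) (s (K + 1)), f n := htel K
      _ ≤ ∑' n, f (n + s 1) := hC K
  exact (summable_nat_add_iff 1).mp h2
end

section
/- Let s be the increasing enumeration of positive integers whose decimal representation contains no digit 9. Then the counting function S(n) = #{m ≤ n : m has no digit 9} satisfies S(n) ≤ 10·n^{log 9 / log 10} for all n ≥ 1. -/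
/-!
Reading the base-`b` digits of a number whose digits are all below `c` as base-`c` digits is
injective, so at most `c ^ d` numbers below `b ^ d` avoid the digits `c, …, b - 1`. If `n` has `d`
digits then `b ^ (d - 1) ≤ n`, hence `c ^ d = c * (b ^ (d - 1)) ^ logb b c ≤ b * n ^ logb b c`.
Here `b = 10` and `c = 9`.
-/

open Finset

namespace Nat

theorem digits_ofDigits_digits {b c m : ℕ} (hc : 1 < c) (hm : ∀ x ∈ b.digits m, x < c) :
    c.digits (ofDigits c (b.digits m)) = b.digits m :=
  digits_ofDigits c hc _ hm fun _ => getLast_digit_ne_zero b (by rintro rfl; simp_all)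

theorem card_filter_digits_lt_le {b c : ℕ} (hb : 1 < b) (hc : 1 < c) (d : ℕ) :
    #{m ∈ range (b ^ d) | ∀ x ∈ b.digits m, x < c} ≤ c ^ d := by
  rw [← card_range (c ^ d)]
  refine card_le_card_of_injOn (fun m => ofDigits c (b.digits m)) ?_ ?_
  · intro m hm
    simp only [coe_filter, coe_range, mem_range, Set.mem_Iio, Set.mem_ofPred_eq] at hm ⊢
    calc ofDigits c (b.digits m) < c ^ (b.digits m).length := ofDigits_lt_base_pow_length hc hm.2
      _ ≤ c ^ d := Nat.pow_le_pow_right (by omega) ((digits_length_le_iff hb m).2 hm.1)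
  · intro m hm m' hm' h
    simp only [coe_filter, Set.mem_ofPred_eq] at hm hm' h
    rw [← digits_inj_iff (b := b), ← digits_ofDigits_digits hc hm.2,
      ← digits_ofDigits_digits hc hm'.2, h]

theorem card_filter_sub_one_notMem_digits_le {b : ℕ} (hb : 2 < b) (n : ℕ) :
    #{m ∈ Icc 1 n | b - 1 ∉ b.digits m} ≤ (b - 1) ^ (b.digits n).length := by
  refine le_trans (card_le_card fun m hm => ?_)
    (card_filter_digits_lt_le (b := b) (c := b - 1) (by omega) (by omega) _)
  simp only [mem_filter, mem_Icc, mem_range] at hm ⊢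
  refine ⟨hm.1.2.trans_lt (lt_base_pow_length_digits (b := b) (by omega)), fun x hx => ?_⟩
  have := digits_lt_base (by omega) hx
  have : x ≠ b - 1 := by rintro rfl; exact hm.2 hx
  omega

end Nat

theorem Real.pow_le_rpow_logb {b c x : ℝ} {k : ℕ} (hb : 1 < b) (hc : 1 ≤ c) (h : b ^ k ≤ x) :
    c ^ k ≤ x ^ logb b c := by
  calc c ^ k = (b ^ logb b c) ^ k := by rw [rpow_logb (by linarith) hb.ne' (by linarith)]
    _ = (b ^ k) ^ logb b c := rpow_pow_comm (by linarith) _ _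
    _ ≤ x ^ logb b c := rpow_le_rpow (by positivity) h (logb_nonneg hb hc)

theorem kempner_counting_bound
    (S : ℕ → ℕ)
    (hS : ∀ n, S n = ((Finset.Icc 1 n).filter (fun m => 9 ∉ Nat.digits 10 m)).card) :
    ∀ n : ℕ, 1 ≤ n → (S n : ℝ) ≤ 10 * (n : ℝ) ^ (Real.log 9 / Real.log 10) := by
  intro n hn
  set d := (Nat.digits 10 n).length
  have hd : d = d - 1 + 1 := by
    have : 0 < d := (Nat.lt_digits_length_iff (by norm_num) n).2 (by simpa using hn)
    omega
  have hcount : S n ≤ 9 ^ d := hS n ▸ Nat.card_filter_sub_one_notMem_digits_le (by norm_num) n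
  have hlower : (10 : ℝ) ^ (d - 1) ≤ n := by
    exact_mod_cast (Nat.lt_digits_length_iff (by norm_num) n).1 (by omega)
  have hpow := Real.pow_le_rpow_logb (by norm_num) (by norm_num : (1 : ℝ) ≤ 9) hlower
  have hnonneg : (0 : ℝ) ≤ (n : ℝ) ^ Real.logb 10 9 := by positivity
  calc (S n : ℝ) ≤ 9 ^ d := by exact_mod_cast hcount
    _ = 9 * 9 ^ (d - 1) := by rw [← pow_succ', ← hd]
    _ ≤ 10 * (n : ℝ) ^ Real.logb 10 9 := by linarith
end

section
/- (Kempner) The sum of the reciprocals of those positive integers whose decimal representation contains no digit 9 converges. -/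
/-!
Split the positive integers into the blocks `[b ^ k, b ^ (k + 1))` of numbers with `k + 1`
digits in base `b`. Stripping the last digit maps the members of block `k + 1` avoiding the
digit `d` into block `k`, and the stripped digit has only `b - 1` possible values, so block `k`
contains at most `(b - 1) ^ (k + 1)` such numbers. Each of them is at least `b ^ k`, so the block
contributes at most `(b - 1) * ((b - 1) / b) ^ k` to the series, and these bounds form a
convergent geometric series.
-/

open Finset

namespace Nat

variable {b d : ℕ}

theorem card_filter_digit_notMem_Ico_pow_le (hb : 1 < b) (hd : d < b) (k : ℕ) :
    #{n ∈ Ico (b ^ k) (b ^ (k + 1)) | d ∉ b.digits n} ≤ (b - 1) ^ (k + 1) := by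
  induction k with
  | zero =>
    calc #{n ∈ Ico (b ^ 0) (b ^ (0 + 1)) | d ∉ b.digits n}
        ≤ #(Ico 1 b) := card_le_card (by simp)
      _ = (b - 1) ^ (0 + 1) := by simp
  | succ k ih =>
    have hstrip : {n ∈ Ico (b ^ (k + 1)) (b ^ (k + 1 + 1)) | d ∉ b.digits n} ⊆
        image (fun p : ℕ × ℕ => b * p.1 + p.2)
          ({n ∈ Ico (b ^ k) (b ^ (k + 1)) | d ∉ b.digits n} ×ˢ (range b).erase d) := by
      intro n hn
      simp only [mem_filter, mem_Ico] at hn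
      obtain ⟨⟨hlo, hhi⟩, hdn⟩ := hn
      rw [digits_def' hb ((pow_pos (by omega) _).trans_le hlo), List.mem_cons, not_or] at hdn
      refine mem_image.2 ⟨(n / b, n % b), ?_, div_add_mod n b⟩
      simp only [mem_product, mem_filter, mem_Ico, mem_erase, mem_range]
      refine ⟨⟨⟨?_, ?_⟩, hdn.2⟩, Ne.symm hdn.1, mod_lt n (by omega)⟩
      · rwa [le_div_iff_mul_le (by omega), ← pow_succ]
      · rwa [div_lt_iff_lt_mul (by omega), ← pow_succ]
    calc #{n ∈ Ico (b ^ (k + 1)) (b ^ (k + 1 + 1)) | d ∉ b.digits n}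
        ≤ #({n ∈ Ico (b ^ k) (b ^ (k + 1)) | d ∉ b.digits n} ×ˢ (range b).erase d) :=
          (card_le_card hstrip).trans Finset.card_image_le
      _ = #{n ∈ Ico (b ^ k) (b ^ (k + 1)) | d ∉ b.digits n} * (b - 1) := by
          rw [card_product, card_erase_of_mem (mem_range.2 hd), card_range]
      _ ≤ (b - 1) ^ (k + 1 + 1) := by rw [pow_succ _ (k + 1)]; gcongr

theorem sum_one_div_filter_digit_notMem_Ico_pow_le (hb : 1 < b) (hd : d < b) (k : ℕ) :
    ∑ n ∈ Ico (b ^ k) (b ^ (k + 1)) with d ∉ b.digits n, (1 : ℝ) / n ≤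
      (b - 1) * ((b - 1) / b) ^ k := by
  have hterm : ∀ n ∈ {n ∈ Ico (b ^ k) (b ^ (k + 1)) | d ∉ b.digits n},
      (1 : ℝ) / n ≤ 1 / b ^ k := by
    intro n hn
    have hn : (b : ℝ) ^ k ≤ n := by exact_mod_cast (mem_Ico.1 (mem_filter.1 hn).1).1
    gcongr
  calc ∑ n ∈ Ico (b ^ k) (b ^ (k + 1)) with d ∉ b.digits n, (1 : ℝ) / n
      ≤ #{n ∈ Ico (b ^ k) (b ^ (k + 1)) | d ∉ b.digits n} * (1 / (b : ℝ) ^ k) := by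
        simpa using sum_le_card_nsmul _ _ _ hterm
    _ ≤ ((b - 1 : ℕ) : ℝ) ^ (k + 1) * (1 / (b : ℝ) ^ k) := by
        gcongr
        exact_mod_cast card_filter_digit_notMem_Ico_pow_le hb hd k
    _ = (b - 1) * ((b - 1) / b) ^ k := by
        rw [cast_sub hb.le, cast_one, div_pow, pow_succ]
        field_simp

theorem sum_range_pow_eq_add_sum_Ico_pow {M : Type*} [AddCommMonoid M] (f : ℕ → M)
    (hb : 1 ≤ b) (K : ℕ) :
    ∑ n ∈ range (b ^ K), f n =
      f 0 + ∑ k ∈ range K, ∑ n ∈ Ico (b ^ k) (b ^ (k + 1)), f n := by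
  induction K with
  | zero => simp
  | succ K ih =>
    rw [sum_range_succ, ← add_assoc, ← ih,
      sum_range_add_sum_Ico _ (pow_le_pow_right₀ hb K.le_succ)]

theorem summable_one_div_of_digit_notMem (hb : 1 < b) (hd : d < b) :
    Summable (fun n : {m : ℕ // 1 ≤ m ∧ d ∉ b.digits m} => (1 : ℝ) / n) := by
  set f := Set.indicator {m : ℕ | 1 ≤ m ∧ d ∉ b.digits m} fun n : ℕ => (1 : ℝ) / n
  have hf : ∀ n, 0 ≤ f n := Set.indicator_nonneg fun n _ => by positivity
  have hf₀ : f 0 = 0 := Set.indicator_of_notMem (by simp) _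
  have hblock : ∀ k, ∑ n ∈ Ico (b ^ k) (b ^ (k + 1)), f n =
      ∑ n ∈ Ico (b ^ k) (b ^ (k + 1)) with d ∉ b.digits n, (1 : ℝ) / n := by
    intro k
    rw [sum_filter]
    refine sum_congr rfl fun n hn => ?_
    have hn : 1 ≤ n := (one_le_pow k b (by omega)).trans (mem_Ico.1 hn).1
    simp [f, Set.indicator_apply, hn]
  set g : ℕ → ℝ := fun k => (b - 1) * ((b - 1) / b) ^ k
  have hb₁ : (1 : ℝ) ≤ b := by exact_mod_cast hb.le
  have hratio : 0 ≤ ((b : ℝ) - 1) / b := div_nonneg (by linarith) (by linarith)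
  have hg : Summable g :=
    (summable_geometric_of_lt_one hratio (by rw [div_lt_one (by linarith)]; linarith)).mul_left _
  refine summable_subtype_iff_indicator.2 <| summable_of_sum_range_le hf (c := ∑' k, g k)
    fun N => ?_
  calc ∑ n ∈ range N, f n
      ≤ ∑ n ∈ range (b ^ N), f n :=
        sum_le_sum_of_subset_of_nonneg (range_subset_range.2 (Nat.lt_pow_self hb).le)
          fun n _ _ => hf n
    _ = ∑ k ∈ range N, ∑ n ∈ Ico (b ^ k) (b ^ (k + 1)), f n := by
        rw [sum_range_pow_eq_add_sum_Ico_pow f hb.le, hf₀, zero_add]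
    _ ≤ ∑ k ∈ range N, g k :=
        sum_le_sum fun k _ =>
          (hblock k).trans_le (sum_one_div_filter_digit_notMem_Ico_pow_le hb hd k)
    _ ≤ ∑' k, g k := hg.sum_le_tsum _ fun k _ => mul_nonneg (by linarith) (pow_nonneg hratio k)

end Nat

theorem kempner_series_converges :
    Summable (fun n : {m : ℕ // 1 ≤ m ∧ 9 ∉ Nat.digits 10 m} => (1 : ℝ) / (n : ℕ)) :=
  Nat.summable_one_div_of_digit_notMem (by norm_num) (by norm_num)
end
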